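/- Let $p \ge 2$ and let $(a_k)_{k=1}^p, (b_k)_{k=1}^p$ satisfy $\sum_{k=1}^p k^2 a_k = -1$, $b_0 + 2\sum_{k=1}^p b_k = 1$ (defining $b_0$), $a_0 = -2\sum_{k=1}^p a_k$, and $\sum_{k=1}^p \left( \frac{k^{2m}}{(2m)!} a_k + \frac{k^{2m-2}}{(2m-2)!} b_k \right) = 0$ for $m = 2, \dots, p$. Then the function $f(\Lambda) = \dfrac{a_0 + 2\sum_{k=1}^p a_k \cos(k\Lambda)}{b_0 + 2\sum_{k=1}^p b_k \cos(k\Lambda)}$ satisfies $f(\Lambda) = \Lambda^2 + 2(-1)^{p+1} \left( \sum_{k=1}^p \frac{k^{2p+2}}{(2p+2)!} a_k + \frac{k^{2p}}{(2p)!} b_k \right) \Lambda^{2p+2} + O(\Lambda^{2p+4})$ as $\Lambda \to 0$. -/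

import Mathlib

/-!
Replacing every cosine by its Maclaurin polynomial turns numerator `N` and denominator `D` into
even polynomials in `Λ`, up to `O(Λ ^ (2p+4))`. The moment conditions say precisely that in
`N - Λ² D` all coefficients below `Λ ^ (2p+2)` cancel, the one of `Λ ^ (2p+2)` being the constant
`c` of the error term. As `D - 1 = O(Λ²)`, also `N - (Λ² + c Λ ^ (2p+2)) D = O(Λ ^ (2p+4))`, and
dividing by `D → 1` gives the expansion of `N / D`.
-/

open Asymptotics Filter

open Finset Real Topology

open scoped Nat

theorem tsum_mul_pow_sub_sum_range_isBigO {𝕜 : Type*} [NormedField 𝕜] [CompleteSpace 𝕜]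
    {c : ℕ → 𝕜} (hc : Summable fun m => ‖c m‖) (n : ℕ) :
    (fun t : 𝕜 => ∑' m, c m * t ^ m - ∑ m ∈ range n, c m * t ^ m) =O[𝓝 0] fun t => t ^ n := by
  refine isBigO_iff.2 ⟨∑' m, ‖c (m + n)‖, ?_⟩
  filter_upwards [Metric.closedBall_mem_nhds (0 : 𝕜) one_pos] with t ht
  rw [mem_closedBall_zero_iff] at ht
  have hpow (m : ℕ) : ‖t‖ ^ m ≤ 1 := pow_le_one₀ (norm_nonneg t) ht
  have hsum : Summable fun m => c m * t ^ m := .of_norm_bounded hc fun m => by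
    simpa [norm_mul] using mul_le_of_le_one_right (norm_nonneg _) (hpow m)
  rw [← hsum.sum_add_tsum_nat_add n, add_sub_cancel_left, norm_pow, ← tsum_mul_right]
  refine tsum_of_norm_bounded (((summable_nat_add_iff n).2 hc).mul_right _).hasSum fun m => ?_
  rw [norm_mul, norm_pow, pow_add, ← mul_assoc]
  exact mul_le_mul_of_nonneg_right (mul_le_of_le_one_right (norm_nonneg _) (hpow m))
    (by positivity)

theorem Real.cos_sub_sum_range_isBigO (n : ℕ) :
    (fun x : ℝ => cos x - ∑ m ∈ range n, (-1) ^ m * x ^ (2 * m) / (2 * m)!) =O[𝓝 0]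
      fun x => x ^ (2 * n) := by
  have hc : Summable fun m : ℕ => ‖(-1 : ℝ) ^ m / (2 * m)!‖ := by
    simpa [Function.comp_def, abs_div] using
      (summable_pow_div_factorial 1).comp_injective (mul_right_injective₀ two_ne_zero)
  have hsq : Tendsto (fun x : ℝ => x ^ 2) (𝓝 0) (𝓝 0) :=
    (continuous_pow 2).tendsto' 0 0 (zero_pow two_ne_zero)
  refine ((tsum_mul_pow_sub_sum_range_isBigO hc n).comp_tendsto hsq).congr (fun x => ?_)
    fun x => by simp [← pow_mul]
  simp only [Function.comp_apply, ← (hasSum_cos x).tsum_eq, ← pow_mul]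
  congr 1
  · exact tsum_congr fun m => by ring
  · exact sum_congr rfl fun m _ => by ring

noncomputable def cosSumCoeff {ι : Type*} (s : Finset ι) (ω c : ι → ℝ) (m : ℕ) : ℝ :=
  (-1) ^ m * ∑ k ∈ s, ω k ^ (2 * m) / (2 * m)! * c k

theorem Real.sum_mul_cos_sub_isBigO {ι : Type*} (s : Finset ι) (ω c : ι → ℝ) (n : ℕ) :
    (fun x : ℝ => ∑ k ∈ s, c k * cos (ω k * x) - ∑ m ∈ range n, cosSumCoeff s ω c m * x ^ (2 * m))
      =O[𝓝 0] fun x => x ^ (2 * n) := by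
  have hk : ∀ k ∈ s, (fun x : ℝ => c k * (cos (ω k * x) -
      ∑ m ∈ range n, (-1) ^ m * (ω k * x) ^ (2 * m) / (2 * m)!)) =O[𝓝 0] fun x => x ^ (2 * n) :=
    fun k _ => by
      have hω : Tendsto (fun x : ℝ => ω k * x) (𝓝 0) (𝓝 0) :=
        (continuous_const_mul (ω k)).tendsto' 0 0 (mul_zero _)
      refine (((cos_sub_sum_range_isBigO n).comp_tendsto hω).trans ?_).const_mul_left (c k)
      simpa only [Function.comp_def, mul_pow] using isBigO_const_mul_self (ω k ^ (2 * n)) _ _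
  refine (IsBigO.sum hk).congr_left fun x => ?_
  simp only [Finset.sum_apply, cosSumCoeff, mul_sub, sum_sub_distrib, mul_sum, sum_mul]
  rw [sum_comm (s := s)]
  congr 1
  exact sum_congr rfl fun m _ => sum_congr rfl fun k _ => by ring

theorem cosSumCoeff_succ_sub {ι : Type*} (s : Finset ι) (ω a b : ι → ℝ) (j : ℕ) :
    cosSumCoeff s ω a (j + 1) - cosSumCoeff s ω b j =
      (-1) ^ (j + 1) * ∑ k ∈ s, (ω k ^ (2 * j + 2) / (2 * j + 2)! * a k
        + ω k ^ (2 * j) / (2 * j)! * b k) := by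
  simp only [cosSumCoeff, sum_add_distrib, mul_add, mul_one, pow_succ]
  ring

theorem sum_range_succ_sub_mul_sum_range {R : Type*} [CommRing R] (α β : ℕ → R) (n : ℕ) (x : R) :
    ∑ m ∈ range (n + 1), α m * x ^ m - x * ∑ m ∈ range n, β m * x ^ m =
      α 0 + ∑ m ∈ range n, (α (m + 1) - β m) * x ^ (m + 1) := by
  have hterm (m : ℕ) :
      (α (m + 1) - β m) * x ^ (m + 1) = α (m + 1) * x ^ (m + 1) - x * (β m * x ^ m) := by
    ring
  simp only [hterm, sum_sub_distrib, sum_range_succ', mul_sum]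
  ring

theorem sum_range_sub_mul_sum_range_eq {R : Type*} [CommRing R] {p : ℕ} (hp : p ≠ 0)
    (α β : ℕ → R) (a₀ b₀ x : R) (h₀ : a₀ + 2 * α 0 = 0) (h₁ : 2 * (α 1 - β 0) = b₀)
    (hmid : ∀ m, 1 ≤ m → m < p → α (m + 1) = β m) :
    a₀ + 2 * ∑ m ∈ range (p + 2), α m * x ^ m - x * (b₀ + 2 * ∑ m ∈ range (p + 1), β m * x ^ m)
      = 2 * (α (p + 1) - β p) * x ^ (p + 1) := by
  have hshift := sum_range_succ_sub_mul_sum_range α β (p + 1) x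
  have hends : ∑ m ∈ range (p + 1), (α (m + 1) - β m) * x ^ (m + 1) =
      (α 1 - β 0) * x + (α (p + 1) - β p) * x ^ (p + 1) := by
    rw [sum_eq_add_of_mem 0 p (by simp) (by simp) (Ne.symm hp) fun m hm hm' => ?_, zero_add,
      pow_one]
    rw [hmid m (by omega) (by simp at hm; omega), sub_self, zero_mul]
  linear_combination 2 * hshift + 2 * hends + x * h₁ + h₀

theorem Asymptotics.IsBigO.div_sub_of_tendsto {α 𝕜 : Type*} [NormedField 𝕜] {l : Filter α}
    {f g d h : α → 𝕜} {d₀ : 𝕜} (hfg : (fun x => f x - g x * d x) =O[l] h)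
    (hd : Tendsto d l (𝓝 d₀)) (hd₀ : d₀ ≠ 0) :
    (fun x => f x / d x - g x) =O[l] h := by
  refine (hfg.mul ((hd.inv₀ hd₀).isBigO_one 𝕜)).congr' ?_ (by simp)
  filter_upwards [hd.eventually_ne hd₀] with x hx
  field_simp

theorem cosSumCoeff_sub_sq_mul_eq {ι : Type*} (s : Finset ι) (ω a b : ι → ℝ) {p : ℕ}
    (hp : p ≠ 0) (a₀ b₀ : ℝ)
    (hid : ∀ m : ℕ, 2 ≤ m → m ≤ p →
      ∑ k ∈ s, (ω k ^ (2 * m) / (2 * m)! * a k + ω k ^ (2 * m - 2) / (2 * m - 2)! * b k) = 0)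
    (hcons : ∑ k ∈ s, ω k ^ 2 * a k = -1) (hb₀ : b₀ = 1 - 2 * ∑ k ∈ s, b k)
    (ha₀ : a₀ = -2 * ∑ k ∈ s, a k) (x : ℝ) :
    a₀ + 2 * ∑ m ∈ range (p + 2), cosSumCoeff s ω a m * x ^ (2 * m)
        - x ^ 2 * (b₀ + 2 * ∑ m ∈ range (p + 1), cosSumCoeff s ω b m * x ^ (2 * m)) =
      (2 * (-1) ^ (p + 1) * ∑ k ∈ s, (ω k ^ (2 * p + 2) / (2 * p + 2)! * a k
        + ω k ^ (2 * p) / (2 * p)! * b k)) * x ^ (2 * p + 2) := by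
  set α := cosSumCoeff s ω a
  set β := cosSumCoeff s ω b
  have h₀ : a₀ + 2 * α 0 = 0 := by simp [α, cosSumCoeff, ha₀]
  have h₁ : 2 * (α 1 - β 0) = b₀ := by
    simp [α, β, cosSumCoeff, div_mul_eq_mul_div, ← sum_div, hcons, hb₀]
    ring
  have hmid (m : ℕ) (hm₁ : 1 ≤ m) (hmp : m < p) : α (m + 1) = β m := by
    have h := hid (m + 1) (by omega) (by omega)
    rw [show 2 * (m + 1) = 2 * m + 2 by ring, show 2 * m + 2 - 2 = 2 * m by omega] at h
    rw [← sub_eq_zero, cosSumCoeff_succ_sub, h, mul_zero]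
  have key := sum_range_sub_mul_sum_range_eq hp α β a₀ b₀ (x ^ 2) h₀ h₁ hmid
  rw [cosSumCoeff_succ_sub] at key
  simp only [← pow_mul] at key
  rw [key]
  ring

theorem Real.div_sub_sq_sub_isBigO_of_sub_sq_mul_eq {ι : Type*} (s : Finset ι)
    (ω a b : ι → ℝ) (a₀ b₀ c : ℝ) (n : ℕ) (hb₀ : b₀ + 2 * ∑ k ∈ s, b k = 1)
    (hpoly : ∀ x : ℝ, a₀ + 2 * ∑ m ∈ range (n + 2), cosSumCoeff s ω a m * x ^ (2 * m)
        - x ^ 2 * (b₀ + 2 * ∑ m ∈ range (n + 1), cosSumCoeff s ω b m * x ^ (2 * m)) =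
      c * x ^ (2 * n + 2)) :
    (fun x : ℝ => (a₀ + 2 * ∑ k ∈ s, a k * cos (ω k * x))
        / (b₀ + 2 * ∑ k ∈ s, b k * cos (ω k * x)) - x ^ 2 - c * x ^ (2 * n + 2))
      =O[𝓝 0] fun x => x ^ (2 * n + 4) := by
  have hA := ((sum_mul_cos_sub_isBigO s ω a (n + 2)).const_mul_left 2).congr_right
    fun x => show x ^ (2 * (n + 2)) = x ^ (2 * n + 4) by ring
  have hB := (((isBigO_refl (fun x : ℝ => x ^ 2) _).mul
    (sum_mul_cos_sub_isBigO s ω b (n + 1))).const_mul_left 2).congr_right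
    fun x => show x ^ 2 * x ^ (2 * (n + 1)) = x ^ (2 * n + 4) by ring
  have hB₀ := ((isBigO_const_mul_self (2 * c) (fun x : ℝ => x ^ (2 * n + 2)) _).mul
    (sum_mul_cos_sub_isBigO s ω b 1)).congr_right
    fun x => show x ^ (2 * n + 2) * x ^ (2 * 1) = x ^ (2 * n + 4) by ring
  have hD : Tendsto (fun x : ℝ => b₀ + 2 * ∑ k ∈ s, b k * cos (ω k * x)) (𝓝 0) (𝓝 1) :=
    (by fun_prop : Continuous _).tendsto' 0 1 (by simp [hb₀])
  have hnum : (fun x : ℝ => a₀ + 2 * ∑ k ∈ s, a k * cos (ω k * x)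
      - (x ^ 2 + c * x ^ (2 * n + 2)) * (b₀ + 2 * ∑ k ∈ s, b k * cos (ω k * x)))
        =O[𝓝 0] fun x => x ^ (2 * n + 4) := by
    refine ((hA.sub hB).sub hB₀).congr_left fun x => ?_
    have hβ₀ : b₀ + 2 * cosSumCoeff s ω b 0 = 1 := by simpa [cosSumCoeff] using hb₀
    simp only [sum_range_one, mul_zero, pow_zero, mul_one]
    linear_combination -(hpoly x) + c * x ^ (2 * n + 2) * hβ₀
  exact (hnum.div_sub_of_tendsto hD one_ne_zero).congr_left fun x => by ring

theorem stmt_19 (p : ℕ) (hp : 2 ≤ p) (a b : ℕ → ℝ)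
    (hid : ∀ m : ℕ, 2 ≤ m → m ≤ p →
      ∑ k ∈ Finset.Icc 1 p, ((k : ℝ)^(2*m) / Nat.factorial (2*m) * a k
        + (k : ℝ)^(2*m-2) / Nat.factorial (2*m-2) * b k) = 0)
    (hcons : ∑ k ∈ Finset.Icc 1 p, (k : ℝ)^2 * a k = -1)
    (b₀ : ℝ) (hb₀ : b₀ = 1 - 2 * ∑ k ∈ Finset.Icc 1 p, b k)
    (a₀ : ℝ) (ha₀ : a₀ = -2 * ∑ k ∈ Finset.Icc 1 p, a k) :
    (fun Λ : ℝ =>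
        (a₀ + 2 * ∑ k ∈ Finset.Icc 1 p, a k * Real.cos (k * Λ))
          / (b₀ + 2 * ∑ k ∈ Finset.Icc 1 p, b k * Real.cos (k * Λ))
        - Λ^2
        - 2 * (-1 : ℝ)^(p+1)
            * (∑ k ∈ Finset.Icc 1 p, ((k : ℝ)^(2*p+2) / Nat.factorial (2*p+2) * a k
                + (k : ℝ)^(2*p) / Nat.factorial (2*p) * b k))
            * Λ^(2*p+2))
      =O[nhds 0] (fun Λ : ℝ => Λ^(2*p+4)) := by
  have hb₀' : b₀ + 2 * ∑ k ∈ Finset.Icc 1 p, b k = 1 := by rw [hb₀]; ring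
  exact div_sub_sq_sub_isBigO_of_sub_sq_mul_eq _ Nat.cast a b a₀ b₀ _ p hb₀'
    (cosSumCoeff_sub_sq_mul_eq _ Nat.cast a b (by omega) a₀ b₀ hid hcons hb₀ ha₀)
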